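/- arXiv:1702.00102 — 2 statements merged into one kernel-verified Lean document; each statement's English description precedes it below -/
import Mathlib

section
/- Let Δ' ⊂ ℝ³ be the convex hull of the seven points (0,2,−1), (−1,1,−1), (−1,−1,−1), (5,−1,−1), (4,0,−1), (1,0,0), (−1,−1,1). Then Δ' contains the origin in its interior and its polar dual (Δ')* equals the convex hull of the seven integer points (0,0,1), (−1,−2,−3), (−1,−3,−5), (1,−1,−1), (1,0,0), (0,1,0), (−1,−1,−3); in particular Δ' is a reflexive polytope. -/
/-!
The polar of `conv V` is cut out by the seven inequalities `⟨y, v⟩ ≥ -1`, `v ∈ V`, and each of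
the seven dual points satisfies them. Conversely this H-polytope is covered by four tetrahedra
with vertices among the dual points, fanned around the edge from `(0,0,1)` to `(-1,-3,-5)`; on
each of them the barycentric coordinates are nonnegative, being combinations of the seven
inequalities and the inequality selecting the tetrahedron. The origin lies in the open simplex
spanned by `(0,2,-1)`, `(-1,1,-1)`, `(5,-1,-1)`, `(-1,-1,1)`.
-/

open Matrix

section Polar

variable {ι : Type*} [Fintype ι]

def polarDual (s : Set (ι → ℝ)) : Set (ι → ℝ) := {y | ∀ x ∈ s, -1 ≤ y ⬝ᵥ x}

lemma convex_polarDual (s : Set (ι → ℝ)) : Convex ℝ (polarDual s) := by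
  have : polarDual s = ⋂ x ∈ s, {y | -1 ≤ y ⬝ᵥ x} := by ext; simp [polarDual]
  rw [this]
  exact convex_iInter₂ fun x _ =>
    convex_halfSpace_ge ⟨fun a b => add_dotProduct a b x, fun c a => smul_dotProduct c a x⟩ _

lemma polarDual_convexHull (s : Set (ι → ℝ)) : polarDual (convexHull ℝ s) = polarDual s := by
  refine subset_antisymm (fun y hy x hx => hy x (subset_convexHull ℝ s hx))
    fun y hy x hx => ?_
  exact convexHull_min hy
    (convex_halfSpace_ge ⟨dotProduct_add y, fun c x => dotProduct_smul c y x⟩ (-1)) hx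

end Polar

section ConvexCombination

variable {ι E : Type*} [Fintype ι] [AddCommGroup E] [Module ℝ E] {s : Set E} {p : ι → E}

lemma mem_convexHull_of_sum_smul_eq (hp : ∀ i, p i ∈ s) {w : ι → ℝ} (hw₀ : ∀ i, 0 ≤ w i)
    (hw₁ : ∑ i, w i = 1) {x : E} (hx : ∑ i, w i • p i = x) : x ∈ convexHull ℝ s :=
  hx ▸ (convex_convexHull ℝ s).sum_mem (fun i _ => hw₀ i) hw₁ fun i _ =>
    subset_convexHull ℝ s (hp i)

lemma mem_interior_convexHull_of_barycentric [TopologicalSpace E] (hp : ∀ i, p i ∈ s)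
    {w : ι → E → ℝ} (hw : ∀ i, Continuous (w i)) (hw₁ : ∀ x, ∑ i, w i x = 1)
    (hwp : ∀ x, ∑ i, w i x • p i = x) {x₀ : E} (hx₀ : ∀ i, 0 < w i x₀) :
    x₀ ∈ interior (convexHull ℝ s) := by
  refine mem_interior.2 ⟨⋂ i, {x | 0 < w i x}, fun x hx => ?_,
    isOpen_iInter_of_finite fun i => isOpen_lt continuous_const (hw i), Set.mem_iInter.2 hx₀⟩
  exact mem_convexHull_of_sum_smul_eq hp (fun i => (Set.mem_iInter.1 hx i).le) (hw₁ x) (hwp x)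

lemma mem_convexHull_of_four {a b c d : E} (ha : a ∈ s) (hb : b ∈ s) (hc : c ∈ s)
    (hd : d ∈ s) {wa wb wc wd : ℝ} (hwa : 0 ≤ wa) (hwb : 0 ≤ wb) (hwc : 0 ≤ wc) (hwd : 0 ≤ wd)
    (hw : wa + wb + wc + wd = 1) {x : E} (hx : wa • a + wb • b + wc • c + wd • d = x) :
    x ∈ convexHull ℝ s := by
  refine mem_convexHull_of_sum_smul_eq (p := ![a, b, c, d]) (w := ![wa, wb, wc, wd]) ?_ ?_ ?_ ?_
  · intro i; fin_cases i <;> assumption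
  · intro i; fin_cases i <;> assumption
  · simpa [Fin.sum_univ_four] using hw
  · simpa [Fin.sum_univ_four] using hx

end ConvexCombination

namespace Z10

def vertices : Set (Fin 3 → ℝ) :=
  {![0,2,-1], ![-1,1,-1], ![-1,-1,-1], ![5,-1,-1], ![4,0,-1], ![1,0,0], ![-1,-1,1]}

def dualVertices : Set (Fin 3 → ℝ) :=
  {![0,0,1], ![-1,-2,-3], ![-1,-3,-5], ![1,-1,-1], ![1,0,0], ![0,1,0], ![-1,-1,-3]}

lemma zero_mem_interior_convexHull_vertices :
    (0 : Fin 3 → ℝ) ∈ interior (convexHull ℝ vertices) := by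
  refine mem_interior_convexHull_of_barycentric
    (p := ![![0,2,-1], ![-1,1,-1], ![5,-1,-1], ![-1,-1,1]])
    (w := ![fun x => 1/4 + 1/4 * x 0 + 3/4 * x 1 + 3/4 * x 2,
      fun x => 1/8 - 3/8 * x 0 - 5/8 * x 1 - 9/8 * x 2,
      fun x => 1/8 + 1/8 * x 0 - 1/8 * x 1 - 1/8 * x 2,
      fun x => 1/2 + 1/2 * x 2]) ?_ ?_ ?_ ?_ ?_
  · intro i; fin_cases i <;> simp [vertices]
  · intro i; fin_cases i <;> simp <;> fun_prop
  · intro x; simp only [Fin.sum_univ_four, cons_val_zero, cons_val_one, cons_val]; ring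
  · intro x; ext j; fin_cases j <;> simp [Fin.sum_univ_four] <;> ring
  · intro i; fin_cases i <;> norm_num

lemma dualVertices_subset_polarDual : dualVertices ⊆ polarDual vertices := by
  intro y hy
  simp only [dualVertices, Set.mem_insert_iff, Set.mem_singleton_iff] at hy
  rcases hy with rfl | rfl | rfl | rfl | rfl | rfl | rfl <;>
    norm_num [polarDual, vertices, dotProduct, Fin.sum_univ_three, cons_val_two]

lemma polarDual_vertices_subset_convexHull_dualVertices :
    polarDual vertices ⊆ convexHull ℝ dualVertices := by
  intro y hy
  simp only [polarDual, vertices, Set.forall_mem_insert, Set.mem_singleton_iff, forall_eq,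
    dotProduct, Fin.sum_univ_three, cons_val_zero, cons_val_one, cons_val_two, tail_cons,
    head_cons] at hy
  obtain ⟨g₁, g₂, g₃, g₄, g₅, g₆, g₇⟩ := hy
  -- the cases are cut out by the planes through the edge `(0,0,1)`, `(-1,-3,-5)` and the points
  -- `(-1,-1,-3)`, `(0,1,0)`, `(1,0,0)`
  rcases le_or_gt (1 + 3 * y 0 + y 1 - y 2) 0 with c₁ | c₁
  · refine mem_convexHull_of_four (a := ![0,0,1]) (b := ![-1,-2,-3]) (c := ![-1,-3,-5])
      (d := ![-1,-1,-3]) (wa := 1 + y 0) (wb := -1 - 3 * y 0 - y 1 + y 2)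
      (wc := 1/2 + 2 * y 0 - 1/2 * y 2) (wd := 1/2 + y 1 - 1/2 * y 2) ?_ ?_ ?_ ?_ ?_ ?_ ?_ ?_ ?_ ?_
    all_goals first | (simp [dualVertices]; done) | linarith | ring1 |
      (ext j; fin_cases j <;> simp <;> ring)
  rcases le_or_gt (1 + 9 * y 0 - y 1 - y 2) 0 with c₂ | c₂
  · refine mem_convexHull_of_four (a := ![0,0,1]) (b := ![-1,-3,-5]) (c := ![0,1,0])
      (d := ![-1,-1,-3]) (wa := 1/2 - 1/2 * y 0 - 1/2 * y 1 + 1/2 * y 2)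
      (wb := 1/4 + 5/4 * y 0 - 1/4 * y 1 - 1/4 * y 2)
      (wc := 1/2 + 3/2 * y 0 + 1/2 * y 1 - 1/2 * y 2)
      (wd := -1/4 - 9/4 * y 0 + 1/4 * y 1 + 1/4 * y 2) ?_ ?_ ?_ ?_ ?_ ?_ ?_ ?_ ?_ ?_
    all_goals first | (simp [dualVertices]; done) | linarith | ring1 |
      (ext j; fin_cases j <;> simp <;> ring)
  rcases le_or_gt (-3 + 3 * y 0 - 7 * y 1 + 3 * y 2) 0 with c₃ | c₃
  · refine mem_convexHull_of_four (a := ![0,0,1]) (b := ![-1,-3,-5]) (c := ![1,0,0])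
      (d := ![0,1,0]) (wa := 1/2 - 1/2 * y 0 - 1/2 * y 1 + 1/2 * y 2)
      (wb := 1/10 - 1/10 * y 0 - 1/10 * y 1 - 1/10 * y 2)
      (wc := 1/10 + 9/10 * y 0 - 1/10 * y 1 - 1/10 * y 2)
      (wd := 3/10 - 3/10 * y 0 + 7/10 * y 1 - 3/10 * y 2) ?_ ?_ ?_ ?_ ?_ ?_ ?_ ?_ ?_ ?_
    all_goals first | (simp [dualVertices]; done) | linarith | ring1 |
      (ext j; fin_cases j <;> simp <;> ring)
  · refine mem_convexHull_of_four (a := ![0,0,1]) (b := ![-1,-3,-5]) (c := ![1,-1,-1])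
      (d := ![1,0,0]) (wa := 1/2 - 1/2 * y 0 - 1/2 * y 1 + 1/2 * y 2)
      (wb := 1/4 - 1/4 * y 0 + 1/4 * y 1 - 1/4 * y 2)
      (wc := -3/4 + 3/4 * y 0 - 7/4 * y 1 + 3/4 * y 2)
      (wd := 1 + 2 * y 1 - y 2) ?_ ?_ ?_ ?_ ?_ ?_ ?_ ?_ ?_ ?_
    all_goals first | (simp [dualVertices]; done) | linarith | ring1 |
      (ext j; fin_cases j <;> simp <;> ring)

end Z10

/-- The polytope Δ' contains the origin in its interior and its polar dual
is the convex hull of the listed integer points; in particular Δ' is reflexive. -/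
theorem stmt_0 :
    let Δ' : Set (Fin 3 → ℝ) := convexHull ℝ ({![0,2,-1], ![-1,1,-1], ![-1,-1,-1], ![5,-1,-1], ![4,0,-1], ![1,0,0], ![-1,-1,1]} : Set (Fin 3 → ℝ))
    (0 : Fin 3 → ℝ) ∈ interior Δ' ∧
    {y : Fin 3 → ℝ | ∀ x ∈ Δ', -1 ≤ ∑ i, y i * x i} =
      convexHull ℝ ({![0,0,1], ![-1,-2,-3], ![-1,-3,-5], ![1,-1,-1], ![1,0,0], ![0,1,0], ![-1,-1,-3]} : Set (Fin 3 → ℝ)) := by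
  refine ⟨Z10.zero_mem_interior_convexHull_vertices, ?_⟩
  change polarDual (convexHull ℝ Z10.vertices) = convexHull ℝ Z10.dualVertices
  rw [polarDual_convexHull]
  exact subset_antisymm Z10.polarDual_vertices_subset_convexHull_dualVertices
    (convexHull_min Z10.dualVertices_subset_polarDual (convex_polarDual _))
end

section
/- Let Δ ⊂ ℝ³ be the convex hull of (−1,0,2), (0,1,0), (1,2,−1), (1,1,−1), (0,−1,0), (0,−1,−1) (a reflexive polytope). For every edge Γ of Δ, at least one of the following holds: the only points of ℤ³ on Γ are its two endpoints, or the only points of ℤ³ on the dual edge Γ* = {y ∈ Δ* : ⟨y, x⟩ = −1 for all x ∈ Γ} are its two endpoints. (Equivalently, l*(Γ)·l*(Γ*) = 0 for all edges Γ, so the sum Σ_Γ l*(Γ) l*(Γ*) over all edges of Δ vanishes.) -/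
/-!
Since `vectorSpan ℝ Γ` is a line, an edge `Γ` of `Δ` has at most two extreme points, so by
Krein–Milman it is the segment between two vertices `v`, `w`. For every pair of vertices except
`{(0,1,0), (0,-1,0)}` there is an integral functional `c` with `c (w - v) = 1`; evaluating it at a
lattice point `v + t (w - v)` of the segment shows `t ∈ ℤ`, i.e. the point is `v` or `w`. The
remaining pair is not an edge: its midpoint is the origin, and an exposed face of `Δ` through the
origin also contains `(0,-1,0)` and `(-1,0,2)`, whose negatives point into `Δ`, so it is not
collinear. Hence the first alternative always holds.
-/

open Set

section Convex

variable {E : Type*} [AddCommGroup E] [Module ℝ E]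

theorem Collinear.eq_or_eq_or_eq_of_mem_extremePoints {s : Set E} (hs : Collinear ℝ s)
    {x y z : E} (hx : x ∈ s.extremePoints ℝ) (hy : y ∈ s.extremePoints ℝ)
    (hz : z ∈ s.extremePoints ℝ) : x = y ∨ y = z ∨ z = x := by
  have hxyz : Collinear ℝ ({x, y, z} : Set E) :=
    hs.subset (insert_subset hx.1 (insert_subset hy.1 (singleton_subset_iff.2 hz.1)))
  rcases hxyz.wbtw_or_wbtw_or_wbtw with h | h | h
  · rcases (mem_extremePoints_iff_forall_segment.1 hy).2 x hx.1 z hz.1 h.mem_segment with h | h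
    exacts [Or.inl h, Or.inr (Or.inl h.symm)]
  · rcases (mem_extremePoints_iff_forall_segment.1 hz).2 y hy.1 x hx.1 h.mem_segment with h | h
    exacts [Or.inr (Or.inl h), Or.inr (Or.inr h.symm)]
  · rcases (mem_extremePoints_iff_forall_segment.1 hx).2 z hz.1 y hy.1 h.mem_segment with h | h
    exacts [Or.inr (Or.inr h), Or.inl h.symm]

theorem IsExposed.mem_of_neg_smul_mem [TopologicalSpace E] {K Γ : Set E} (h : IsExposed ℝ K Γ)
    (h0 : (0 : E) ∈ Γ) {x : E} (hx : x ∈ K) {c : ℝ} (hc : 0 < c) (hcx : -(c • x) ∈ K) :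
    x ∈ Γ := by
  obtain ⟨l, rfl⟩ := h ⟨0, h0⟩
  have hle : ∀ y ∈ K, l y ≤ 0 := by simpa using h0.2
  have hlx : 0 ≤ l x := by
    have := hle _ hcx
    rw [map_neg, map_smul, smul_eq_mul, neg_nonpos] at this
    exact nonneg_of_mul_nonneg_right this hc
  exact ⟨hx, fun y hy => (hle y hy).trans hlx⟩

theorem Collinear.exists_eq_segment [TopologicalSpace E] [IsTopologicalAddGroup E]
    [ContinuousSMul ℝ E] [LocallyConvexSpace ℝ E] [T2Space E] {s : Set E} (hcol : Collinear ℝ s)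
    (hcomp : IsCompact s) (hconv : Convex ℝ s) (hfin : (s.extremePoints ℝ).Finite)
    (hne : s.Nonempty) :
    ∃ v ∈ s.extremePoints ℝ, ∃ w ∈ s.extremePoints ℝ, s = segment ℝ v w := by
  have hKM : convexHull ℝ (s.extremePoints ℝ) = s := by
    rw [← (hfin.isCompact_convexHull ℝ).isClosed.closure_eq,
      closure_convexHull_extremePoints hcomp hconv]
  obtain ⟨v, hv⟩ : (s.extremePoints ℝ).Nonempty := by
    rw [← convexHull_nonempty_iff (𝕜 := ℝ), hKM]
    exact hne
  obtain ⟨w, hw, hvw⟩ : ∃ w ∈ s.extremePoints ℝ, s.extremePoints ℝ ⊆ {v, w} := by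
    by_cases h : ∃ w ∈ s.extremePoints ℝ, w ≠ v
    · obtain ⟨w, hw, hwv⟩ := h
      refine ⟨w, hw, fun u hu => ?_⟩
      rcases hcol.eq_or_eq_or_eq_of_mem_extremePoints hv hw hu with h | h | h
      exacts [absurd h.symm hwv, Or.inr h.symm, Or.inl h]
    · push Not at h
      exact ⟨v, hv, fun u hu => Or.inl (h u hu)⟩
  refine ⟨v, hv, w, hw, (hconv.segment_subset hv.1 hw.1).antisymm' ?_⟩
  rw [← hKM, ← convexHull_pair]
  exact convexHull_mono hvw

end Convex

theorem eq_or_eq_of_intCast_mem_segment {ι : Type*} [Fintype ι] {a b p : ι → ℤ} (c : ι → ℤ)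
    (hc : ∑ i, c i * (b i - a i) = 1)
    (hp : (fun i => (p i : ℝ)) ∈ segment ℝ (fun i => (a i : ℝ)) (fun i => (b i : ℝ))) :
    p = a ∨ p = b := by
  rw [segment_eq_image'] at hp
  obtain ⟨t, ⟨ht0, ht1⟩, hpt⟩ := hp
  have hcoord : ∀ i, (p i : ℝ) = a i + t * (b i - a i) := fun i => (congrFun hpt i).symm
  have hN : ((∑ i, c i * (p i - a i) : ℤ) : ℝ) = t := by
    have hc' : ∑ i, (c i : ℝ) * (b i - a i) = 1 := by exact_mod_cast hc
    push_cast
    simp_rw [hcoord, add_sub_cancel_left, mul_left_comm _ t, ← Finset.mul_sum, hc', mul_one]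
  have ht : t = 0 ∨ t = 1 := by
    have h0 : (0 : ℤ) ≤ ∑ i, c i * (p i - a i) := by exact_mod_cast hN ▸ ht0
    have h1 : ∑ i, c i * (p i - a i) ≤ 1 := by exact_mod_cast hN ▸ ht1
    rcases (by omega : ∑ i, c i * (p i - a i) = 0 ∨ ∑ i, c i * (p i - a i) = 1) with h | h
      <;> simp [← hN, h]
  rcases ht with rfl | rfl
  · left
    funext i
    exact_mod_cast by simpa using hcoord i
  · right
    funext i
    exact_mod_cast by simpa using hcoord i

def vertices : Finset (Fin 3 → ℤ) :=
  {![-1, 0, 2], ![0, 1, 0], ![1, 2, -1], ![1, 1, -1], ![0, -1, 0], ![0, -1, -1]}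

def polytope : Set (Fin 3 → ℝ) :=
  convexHull ℝ ((fun (a : Fin 3 → ℤ) i => (a i : ℝ)) '' vertices)

theorem intCast_vecCons (x y z : ℤ) : (fun i => ((![x, y, z] i : ℤ) : ℝ)) = ![(x : ℝ), y, z] := by
  funext i
  fin_cases i <;> rfl

theorem image_intCast_vertices :
    (fun (a : Fin 3 → ℤ) i => (a i : ℝ)) '' (vertices : Set (Fin 3 → ℤ)) =
      {![-1, 0, 2], ![0, 1, 0], ![1, 2, -1], ![1, 1, -1], ![0, -1, 0], ![0, -1, -1]} := by
  simp [vertices, image_insert_eq, intCast_vecCons]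

theorem exists_bezout_of_mem_vertices : ∀ a ∈ vertices, ∀ b ∈ vertices, a + b ≠ 0 → a = b ∨
    ∃ c ∈ Fintype.piFinset fun _ => ({-1, 0, 1} : Finset ℤ), ∑ i, c i * (b i - a i) = 1 := by
  decide

theorem eq_or_eq_of_intCast_mem_segment_vertices {a b p : Fin 3 → ℤ} (ha : a ∈ vertices)
    (hb : b ∈ vertices) (hab : a + b ≠ 0)
    (hp : (fun i => (p i : ℝ)) ∈ segment ℝ (fun i => (a i : ℝ)) (fun i => (b i : ℝ))) :
    p = a ∨ p = b := by
  rcases exists_bezout_of_mem_vertices a ha b hb hab with rfl | ⟨c, -, hc⟩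
  · rw [segment_same, mem_singleton_iff] at hp
    exact Or.inl (funext fun i => by exact_mod_cast congrFun hp i)
  · exact eq_or_eq_of_intCast_mem_segment c hc hp

theorem vecCons_mem_polytope {x y z : ℤ} (h : ![x, y, z] ∈ vertices) :
    ![(x : ℝ), y, z] ∈ polytope :=
  intCast_vecCons x y z ▸ subset_convexHull ℝ _ (mem_image_of_mem _ h)

theorem zero_notMem_of_isExposed_polytope {Γ : Set (Fin 3 → ℝ)} (hΓ : IsExposed ℝ polytope Γ)
    (hcol : Collinear ℝ Γ) : (0 : Fin 3 → ℝ) ∉ Γ := by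
  intro h0
  have hE : (![0, -1, 0] : Fin 3 → ℝ) ∈ Γ := by
    refine hΓ.mem_of_neg_smul_mem h0 ?_ one_pos ?_
    · simpa using vecCons_mem_polytope (x := 0) (y := -1) (z := 0) (by decide)
    · simpa using vecCons_mem_polytope (x := 0) (y := 1) (z := 0) (by decide)
  have hA : (![-1, 0, 2] : Fin 3 → ℝ) ∈ Γ := by
    refine hΓ.mem_of_neg_smul_mem h0 ?_ (by norm_num : (0 : ℝ) < 1 / 2) ?_
    · simpa using vecCons_mem_polytope (x := -1) (y := 0) (z := 2) (by decide)
    · have hconv : Convex ℝ polytope := convex_convexHull ℝ _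
      convert hconv (vecCons_mem_polytope (x := 1) (y := 1) (z := -1) (by decide))
        (vecCons_mem_polytope (x := 0) (y := -1) (z := -1) (by decide))
        (by norm_num : (0 : ℝ) ≤ 1 / 2) (by norm_num : (0 : ℝ) ≤ 1 / 2) (by norm_num) using 1
      funext i; fin_cases i <;> norm_num
  obtain ⟨u, hu⟩ := (collinear_iff_of_mem h0).1 hcol
  obtain ⟨r, hr⟩ := hu _ hA
  obtain ⟨s, hs⟩ := hu _ hE
  have e1 := congrFun hr 0
  have e2 := congrFun hs 0
  have e3 := congrFun hs 1
  simp only [Matrix.cons_val_zero, Matrix.cons_val_one, Pi.vadd_apply', Pi.smul_apply,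
    smul_eq_mul, Pi.zero_apply, vadd_eq_add, add_zero, zero_eq_mul] at e1 e2 e3
  rcases e2 with rfl | h
  · norm_num at e3
  · rw [h, mul_zero] at e1
    norm_num at e1

/-- For every edge Γ of the reflexive polytope Δ, either Γ has no interior
lattice points or its dual edge Γ* has none: every lattice point on Γ
(resp. on Γ*) is an extreme point, i.e. an endpoint. -/
theorem stmt_9 :
    let Δ : Set (Fin 3 → ℝ) := convexHull ℝ ({![-1,0,2], ![0,1,0], ![1,2,-1], ![1,1,-1], ![0,-1,0], ![0,-1,-1]} : Set (Fin 3 → ℝ))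
    let dual : Set (Fin 3 → ℝ) := {y | ∀ x ∈ Δ, -1 ≤ ∑ i, y i * x i}
    ∀ Γ : Set (Fin 3 → ℝ), IsExposed ℝ Δ Γ →
      Module.finrank ℝ (vectorSpan ℝ Γ) = 1 →
      (∀ p : Fin 3 → ℤ, (fun i => (p i : ℝ)) ∈ Γ →
          (fun i => (p i : ℝ)) ∈ Set.extremePoints ℝ Γ) ∨
      (∀ p : Fin 3 → ℤ,
          (fun i => (p i : ℝ)) ∈ {y ∈ dual | ∀ x ∈ Γ, ∑ i, y i * x i = -1} →
          (fun i => (p i : ℝ)) ∈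
            Set.extremePoints ℝ {y ∈ dual | ∀ x ∈ Γ, ∑ i, y i * x i = -1}) := by
  intro Δ dual Γ hexp hrank
  left
  rw [show Δ = polytope by rw [polytope, image_intCast_vertices]] at hexp
  have hcol : Collinear ℝ Γ := collinear_iff_finrank_le_one.2 hrank.le
  have hne : Γ.Nonempty := by
    by_contra h
    rw [not_nonempty_iff_eq_empty.1 h, vectorSpan_empty, finrank_bot] at hrank
    exact zero_ne_one hrank
  have hfin : ((fun (a : Fin 3 → ℤ) i => (a i : ℝ)) '' vertices).Finite :=
    vertices.finite_toSet.image _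
  have hext : Γ.extremePoints ℝ ⊆ (fun (a : Fin 3 → ℤ) i => (a i : ℝ)) '' vertices :=
    fun x hx => extremePoints_convexHull_subset
      (hexp.isExtreme.extremePoints_subset_extremePoints hx)
  obtain ⟨v, hv, w, hw, hΓ⟩ := hcol.exists_eq_segment
    (hexp.isCompact (hfin.isCompact_convexHull ℝ)) (hexp.convex (convex_convexHull ℝ _))
    (hfin.subset hext) hne
  obtain ⟨a, ha, rfl⟩ := hext hv
  obtain ⟨b, hb, rfl⟩ := hext hw
  have hab : a + b ≠ 0 := by
    intro hab
    refine zero_notMem_of_isExposed_polytope hexp hcol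
      (hΓ ▸ ⟨1 / 2, 1 / 2, by norm_num, by norm_num, by norm_num, ?_⟩)
    rw [eq_neg_of_add_eq_zero_right hab]
    funext i
    simp
  intro p hp
  rcases eq_or_eq_of_intCast_mem_segment_vertices ha hb hab (hΓ ▸ hp) with rfl | rfl
  exacts [hv, hw]
end
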